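/- Let h : ℝ → ℝ be continuous with |h(t)| ≤ a + b|t|^(p-1) for constants a, b ≥ 0 and p > 1, and suppose limsup_{t→±∞} h(t)/(|t|^(p-2)t) < 0. Then H(t) := ∫₀ᵗ h(τ)dτ satisfies limsup_{|t|→∞} H(t)/|t|^p < 0; in particular H(t) → -∞ as |t| → ∞. -/

import Mathlib

/-!
Write `φ(t) = |t|^(p-2) t`, so that `|φ(t)| = |t|^(p-1)` and `|t|^p / p` is a primitive of `φ`.
The limsup hypothesis gives `c < 0` with `h(t) / φ(t) < c` near `±∞`, so on some `[T, ∞)` the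
function `h` lies below `c t^(p-1)` and integrating yields `H(t) ≤ D + (c/p) t^p`, while the growth
bound gives `H(t) ≥ -(a + b/p) t^p` for `t ≥ 1`. The reflection `t ↦ -h(-t)` satisfies the same
hypotheses and turns `t → -∞` into `t → +∞`. Hence `H(t) / |t|^p` eventually lies in a bounded
interval with negative upper end, which bounds the limsup and forces `H(t) → -∞`.
-/

open Filter intervalIntegral Set Real

section HalfLine

variable {p a b c : ℝ} {h : ℝ → ℝ}

lemma abs_rpow_sub_two_mul_self {t : ℝ} (ht : t ≠ 0) : |(|t| ^ (p - 2) * t)| = |t| ^ (p - 1) := by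
  rw [abs_mul, abs_of_nonneg (rpow_nonneg (abs_nonneg t) _), ← rpow_add_one (abs_ne_zero.2 ht)]
  ring_nf

lemma div_abs_rpow_sub_two_mul_self_le (ha : 0 ≤ a) (hp : 1 ≤ p)
    (hgrowth : ∀ t, |h t| ≤ a + b * |t| ^ (p - 1)) {t : ℝ} (ht : 1 ≤ |t|) :
    h t / (|t| ^ (p - 2) * t) ≤ a + b := by
  have hX : 1 ≤ |t| ^ (p - 1) := one_le_rpow ht (by linarith)
  have ht0 : t ≠ 0 := abs_pos.1 (by linarith)
  calc h t / (|t| ^ (p - 2) * t) ≤ |h t| / |t| ^ (p - 1) := by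
        rw [← abs_rpow_sub_two_mul_self ht0, ← abs_div]; exact le_abs_self _
    _ ≤ (a + b * |t| ^ (p - 1)) / |t| ^ (p - 1) := by gcongr; exact hgrowth t
    _ = a / |t| ^ (p - 1) + b := by field_simp
    _ ≤ a + b := by gcongr; exact div_le_self ha hX

lemma le_mul_rpow_sub_one_of_div_lt {t : ℝ} (ht : 0 < t) (hlt : h t / (|t| ^ (p - 2) * t) < c) :
    h t ≤ c * t ^ (p - 1) := by
  have hφ : |t| ^ (p - 2) * t = t ^ (p - 1) := by
    rw [abs_of_pos ht, ← rpow_add_one ht.ne']; ring_nf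
  rw [hφ, div_lt_iff₀ (rpow_pos_of_pos ht _)] at hlt
  exact hlt.le

lemma integral_mul_rpow_sub_one (hp : 0 < p) (c s t : ℝ) :
    ∫ τ in s..t, c * τ ^ (p - 1) = c / p * (t ^ p - s ^ p) := by
  rw [integral_const_mul, integral_rpow (Or.inl (by linarith)), sub_add_cancel]
  ring

lemma integral_le_of_le_mul_rpow_sub_one (hp : 0 < p) (hcont : Continuous h) {T t : ℝ}
    (hdec : ∀ τ, T ≤ τ → h τ ≤ c * τ ^ (p - 1)) (ht : T ≤ t) :
    ∫ τ in (0 : ℝ)..t, h τ ≤ (∫ τ in (0 : ℝ)..T, h τ) - c / p * T ^ p + c / p * t ^ p := by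
  have hmono : ∫ τ in T..t, h τ ≤ ∫ τ in T..t, c * τ ^ (p - 1) :=
    integral_mono_on ht (hcont.intervalIntegrable _ _)
      ((intervalIntegrable_rpow' (by linarith)).const_mul _) fun τ hτ => hdec τ hτ.1
  rw [integral_mul_rpow_sub_one hp, ← integral_add_adjacent_intervals
    (hcont.intervalIntegrable 0 T) (hcont.intervalIntegrable T t)] at *
  linarith [show c / p * (t ^ p - T ^ p) = c / p * t ^ p - c / p * T ^ p by ring]

lemma neg_mul_rpow_le_integral (hp : 1 ≤ p) (ha : 0 ≤ a)
    (hgrowth : ∀ t, 0 ≤ t → |h t| ≤ a + b * t ^ (p - 1)) {t : ℝ} (ht : 1 ≤ t) :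
    -(a + b / p) * t ^ p ≤ ∫ τ in (0 : ℝ)..t, h τ := by
  have hp0 : 0 < p := by linarith
  have hbound : IntervalIntegrable (fun τ => a + b * τ ^ (p - 1)) MeasureTheory.volume 0 t :=
    intervalIntegrable_const.add ((intervalIntegrable_rpow' (by linarith)).const_mul b)
  have hnorm : ‖∫ τ in (0 : ℝ)..t, h τ‖ ≤ ∫ τ in (0 : ℝ)..t, (a + b * τ ^ (p - 1)) :=
    norm_integral_le_of_norm_le (by linarith)
      (MeasureTheory.ae_of_all _ fun τ hτ => hgrowth τ hτ.1.le) hbound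
  rw [integral_add intervalIntegrable_const ((intervalIntegrable_rpow' (by linarith)).const_mul b),
    integral_const, integral_mul_rpow_sub_one hp0, zero_rpow hp0.ne', smul_eq_mul,
    Real.norm_eq_abs] at hnorm
  have htp : t ≤ t ^ p := by simpa using rpow_le_rpow_of_exponent_le ht hp
  nlinarith [neg_abs_le (∫ τ in (0 : ℝ)..t, h τ)]

lemma eventually_integral_div_abs_rpow_mem_Icc (hp : 1 < p) (ha : 0 ≤ a) (hc : c < 0)
    (hcont : Continuous h) (hgrowth : ∀ t, 0 ≤ t → |h t| ≤ a + b * t ^ (p - 1))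
    (hev : ∀ᶠ t in atTop, h t / (|t| ^ (p - 2) * t) < c) :
    ∀ᶠ t in atTop, (∫ τ in (0 : ℝ)..t, h τ) / |t| ^ p ∈ Icc (-(a + b / p)) (c / (2 * p)) := by
  have hp0 : 0 < p := by linarith
  obtain ⟨T, hT⟩ := (hev.and (eventually_gt_atTop 0)).exists_forall_of_atTop
  have hdec : ∀ t, T ≤ t → h t ≤ c * t ^ (p - 1) := fun t ht =>
    le_mul_rpow_sub_one_of_div_lt (hT t ht).2 (hT t ht).1
  set D := (∫ τ in (0 : ℝ)..T, h τ) - c / p * T ^ p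
  have hlim : ∀ᶠ t in atTop, D / t ^ p + c / p < c / (2 * p) := by
    refine ((tendsto_const_nhds.div_atTop (tendsto_rpow_atTop hp0)).add_const (c / p)).eventually
      (gt_mem_nhds ?_)
    rw [zero_add, div_lt_div_iff₀ hp0 (by positivity)]
    nlinarith
  filter_upwards [hlim, eventually_ge_atTop T, eventually_ge_atTop 1] with t hlt hTt h1t
  have htp : 0 < t ^ p := rpow_pos_of_pos (by linarith) p
  rw [abs_of_nonneg (by linarith : 0 ≤ t)]
  refine ⟨(le_div_iff₀ htp).2 (neg_mul_rpow_le_integral hp.le ha hgrowth h1t), ?_⟩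
  calc (∫ τ in (0 : ℝ)..t, h τ) / t ^ p ≤ (D + c / p * t ^ p) / t ^ p := by
        gcongr; exact integral_le_of_le_mul_rpow_sub_one hp0 hcont hdec hTt
    _ = D / t ^ p + c / p := by field_simp
    _ ≤ c / (2 * p) := hlt.le

end HalfLine

lemma integral_neg_comp_neg (h : ℝ → ℝ) (t : ℝ) :
    ∫ τ in (0 : ℝ)..-t, -h (-τ) = ∫ τ in (0 : ℝ)..t, h τ := by
  rw [integral_neg, integral_comp_neg, neg_neg, neg_zero, integral_symm, neg_neg]

theorem stmt_10_general (p a b : ℝ) (hp : 1 < p) (ha : 0 ≤ a)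
    (h : ℝ → ℝ) (hcont : Continuous h)
    (hgrowth : ∀ t : ℝ, |h t| ≤ a + b * |t| ^ (p - 1))
    (hlim : limsup (fun t : ℝ => h t / (|t| ^ (p - 2) * t)) (atBot ⊔ atTop) < 0) :
    limsup (fun t : ℝ => (∫ τ in (0 : ℝ)..t, h τ) / |t| ^ p) (atBot ⊔ atTop) < 0 ∧
      Tendsto (fun t : ℝ => ∫ τ in (0 : ℝ)..t, h τ) (atBot ⊔ atTop) atBot := by
  have habs : Tendsto (fun t : ℝ => |t|) (atBot ⊔ atTop) atTop :=
    tendsto_sup.2 ⟨tendsto_abs_atBot_atTop, tendsto_abs_atTop_atTop⟩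
  have hbdd : IsBoundedUnder (· ≤ ·) (atBot ⊔ atTop) fun t => h t / (|t| ^ (p - 2) * t) :=
    ⟨a + b, eventually_map.2 <| (habs.eventually_ge_atTop 1).mono fun _ ht =>
      div_abs_rpow_sub_two_mul_self_le ha hp.le hgrowth ht⟩
  obtain ⟨c, hlim_lt, hc⟩ := exists_between hlim
  obtain ⟨hev_bot, hev_top⟩ := eventually_sup.1 (eventually_lt_of_limsup_lt hlim_lt hbdd)
  have hF : ∀ᶠ t in atBot ⊔ atTop,
      (∫ τ in (0 : ℝ)..t, h τ) / |t| ^ p ∈ Icc (-(a + b / p)) (c / (2 * p)) := by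
    refine eventually_sup.2 ⟨?_, ?_⟩
    · have hrefl := eventually_integral_div_abs_rpow_mem_Icc (h := fun s => -h (-s)) hp ha hc
        (hcont.comp continuous_neg).neg
        (fun t ht => by simpa [abs_of_nonneg ht] using hgrowth (-t))
        ((tendsto_neg_atTop_atBot.eventually hev_bot).mono fun t ht => by
          rwa [abs_neg, mul_neg, div_neg, ← neg_div] at ht)
      exact (tendsto_neg_atBot_atTop.eventually hrefl).mono fun t ht => by
        rwa [integral_neg_comp_neg, abs_neg] at ht
    · exact eventually_integral_div_abs_rpow_mem_Icc hp ha hc hcont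
        (fun t ht => by simpa [abs_of_nonneg ht] using hgrowth t) hev_top
  have hpow : Tendsto (fun t : ℝ => |t| ^ p) (atBot ⊔ atTop) atTop :=
    (tendsto_rpow_atTop (by linarith)).comp habs
  have hM : c / (2 * p) < 0 := div_neg_of_neg_of_pos hc (by positivity)
  refine ⟨(limsup_le_of_le ?_ (hF.mono fun _ ht => ht.2)).trans_lt hM, ?_⟩
  · -- without this lower bound the real-valued `limsup` would be the junk value `0`
    exact IsBoundedUnder.isCoboundedUnder_le ⟨_, eventually_map.2 (hF.mono fun _ ht => ht.1)⟩
  · refine tendsto_atBot_mono' _ ?_ (hpow.const_mul_atTop_of_neg hM)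
    filter_upwards [hF, hpow.eventually_gt_atTop 0] with t hFt hpos
    exact (div_le_iff₀ hpos).1 hFt.2

theorem stmt_10 (p a b : ℝ) (hp : 1 < p) (ha : 0 ≤ a) (hb : 0 ≤ b)
    (h : ℝ → ℝ) (hcont : Continuous h)
    (hgrowth : ∀ t : ℝ, |h t| ≤ a + b * |t| ^ (p - 1))
    (hlim : limsup (fun t : ℝ => h t / (|t| ^ (p - 2) * t)) (atBot ⊔ atTop) < 0) :
    limsup (fun t : ℝ => (∫ τ in (0 : ℝ)..t, h τ) / |t| ^ p) (atBot ⊔ atTop) < 0 ∧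
      Tendsto (fun t : ℝ => ∫ τ in (0 : ℝ)..t, h τ) (atBot ⊔ atTop) atBot :=
  stmt_10_general p a b hp ha h hcont hgrowth hlim
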